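/- Let G be a connected graph on n vertices with domination number gamma, where 1 <= gamma < ceil(n/3). Then s(G) <= ((3*gamma - 1)/2) * (n - (3*gamma - 1)/2) if gamma is odd, and s(G) <= (3*gamma/2) * (n + 1 - 3*gamma/2) - ceil(n/2) if gamma is even. -/

import Mathlib

open SimpleGraph

variable {V : Type*}

/-- The status of a vertex: sum of distances to all other vertices. -/
noncomputable def status [Fintype V] (G : SimpleGraph V) (u : V) : ℕ :=
  ∑ v : V, G.dist u v

/-- The minimum status of a graph. -/
noncomputable def minStatus [Fintype V] (G : SimpleGraph V) : ℕ :=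
  sInf (Set.range (status G))

/-- The matching number: maximum cardinality of a matching. -/
noncomputable def matchingNumber (G : SimpleGraph V) : ℕ :=
  sSup {k | ∃ M : G.Subgraph, M.IsMatching ∧ M.edgeSet.ncard = k}

/-- The domination number: minimum cardinality of a dominating set. -/
noncomputable def domNumber (G : SimpleGraph V) : ℕ :=
  sInf {k | ∃ S : Set V, (∀ v ∉ S, ∃ u ∈ S, G.Adj u v) ∧ S.ncard = k}

/-- The dumbbell `D_n(p,q)`: a path on `n - p - q` vertices `0, …, n-p-q-1`,
with `p` pendant vertices attached to vertex `0` and `q` pendant vertices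
attached to vertex `n-p-q-1`. -/
def dumbbell (n p q : ℕ) : SimpleGraph (Fin n) :=
  SimpleGraph.fromRel (fun a b =>
    ((a : ℕ) + 1 = (b : ℕ) ∧ (b : ℕ) < n - p - q) ∨
    ((a : ℕ) = 0 ∧ n - p - q ≤ (b : ℕ) ∧ (b : ℕ) < n - q) ∨
    ((a : ℕ) = n - p - q - 1 ∧ n - q ≤ (b : ℕ)))

/-- The tree `A_{n,m}`: a star with center `0` and leaves `1, …, n-m`, with one
pendant vertex `n-m+i` attached to leaf `i` for each `i = 1, …, m-1`. -/
def treeA (n m : ℕ) : SimpleGraph (Fin n) :=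
  SimpleGraph.fromRel (fun a b =>
    ((a : ℕ) = 0 ∧ 1 ≤ (b : ℕ) ∧ (b : ℕ) ≤ n - m) ∨
    (1 ≤ (a : ℕ) ∧ (a : ℕ) ≤ m - 1 ∧ (b : ℕ) = n - m + (a : ℕ)))

/-- The caterpillar `C_n(p,q)`: a path on vertices `0, …, n-p-q-1`; pendant
vertex `n-p-q+j` is attached to path vertex `j` for `j = 0, …, p-1`, and pendant
vertex `n-q+j` is attached to path vertex `n-p-2q+j` for `j = 0, …, q-1`. -/
def caterpillar (n p q : ℕ) : SimpleGraph (Fin n) :=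
  SimpleGraph.fromRel (fun a b =>
    ((a : ℕ) + 1 = (b : ℕ) ∧ (b : ℕ) < n - p - q) ∨
    (n - p - q ≤ (b : ℕ) ∧ (b : ℕ) < n - q ∧ (a : ℕ) = (b : ℕ) - (n - p - q)) ∨
    (n - q ≤ (b : ℕ) ∧ (a : ℕ) = (b : ℕ) - p - q))

/-!
Join two vertices of a minimum dominating set `S` when they are at distance at most `3` in `G`;
this graph on `γ` vertices is connected. Its central vertex has eccentricity at most `⌊γ/2⌋` and,
for `γ ≥ 2`, it has a central edge (minimising the largest distance to the pair) with value at
most `⌊(γ - 1)/2⌋`. Back in `G` this gives a vertex of eccentricity at most `(3γ - 1)/2` for odd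
`γ`, and an edge within distance `3γ/2 - 1` of every vertex for even `γ`.

In a connected graph, take a central vertex or a central edge with value `e`. Every level
`1 ≤ i < e` of the distance to it has at least two vertices: if a level held a single vertex `z`,
every farther vertex would be reached through `z`, and moving the centre one step towards `z`
would lower `e`. So at least `c + 2t` vertices lie within distance `t` (with `c = 1` for a vertex
and `2` for an edge), and summing over `t < e` bounds the status.
-/

section LevelCounting

open Finset

variable {W : Type*} [Fintype W] (d : W → ℕ)

lemma add_two_mul_le_card_filter_le {c e : ℕ} (h₀ : c ≤ #{v | d v = 0})
    (hlevel : ∀ i, 1 ≤ i → i < e → 2 ≤ #{v | d v = i}) :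
    ∀ t < e, c + 2 * t ≤ #{v | d v ≤ t} := by
  intro t ht
  induction t with
  | zero => simpa only [nonpos_iff_eq_zero, mul_zero, add_zero] using h₀
  | succ t ih =>
    have hsplit : #{v | d v ≤ t + 1} = #{v | d v ≤ t} + #{v | d v = t + 1} := by
      simp only [card_filter, ← sum_add_distrib]
      refine sum_congr rfl fun v _ => ?_
      split_ifs <;> omega
    have := hlevel (t + 1) (by omega) ht
    have := ih (by omega)
    omega

lemma sum_add_le_mul_card {c e m : ℕ} (hle : ∀ v, d v ≤ e) (hem : e ≤ m)
    (hm : 2 * m + c ≤ Fintype.card W + 1) (hball : ∀ t < e, c + 2 * t ≤ #{v | d v ≤ t}) :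
    ∑ v, d v + m * (m - 1) + m * c ≤ m * Fintype.card W := by
  have hlayers : ∑ v, d v = ∑ t ∈ range m, #{v | t < d v} := by
    simp only [card_filter]
    rw [sum_comm]
    refine sum_congr rfl fun v _ => ?_
    rw [sum_boole, Nat.cast_id, show {t ∈ range m | t < d v} = range (d v) by
      ext t; have := hle v; simp only [mem_filter, mem_range]; omega, card_range]
  have hball' : ∀ t ∈ range m, c + 2 * t ≤ #{v | d v ≤ t} := by
    intro t ht
    rw [mem_range] at ht
    rcases lt_or_ge t e with hte | hte
    · exact hball t hte
    · rw [filter_true_of_mem fun v _ => (hle v).trans hte, card_univ]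
      omega
  have hcompl : ∀ t ∈ range m, #{v | t < d v} + #{v | d v ≤ t} = Fintype.card W := by
    intro t _
    simpa only [not_lt, card_univ] using
      card_filter_add_card_filter_not (s := univ) (fun v => t < d v)
  have hgauss : ∑ t ∈ range m, (c + 2 * t) = m * c + m * (m - 1) := by
    rw [sum_add_distrib, ← mul_sum, sum_const, card_range, smul_eq_mul,
      mul_comm 2, sum_range_id_mul_two]
  calc ∑ v, d v + m * (m - 1) + m * c
      = ∑ t ∈ range m, #{v | t < d v} + ∑ t ∈ range m, (c + 2 * t) := by rw [hlayers, hgauss]; ring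
    _ ≤ ∑ t ∈ range m, (#{v | t < d v} + #{v | d v ≤ t}) := by
        rw [sum_add_distrib (f := fun t => #{v | t < d v})]
        exact Nat.add_le_add_left (sum_le_sum hball') _
    _ = m * Fintype.card W := by rw [sum_congr rfl hcompl, sum_const, card_range, smul_eq_mul]

lemma two_mul_add_le_card_add_one {c e : ℕ} (he : 0 < e) (htop : ∃ x, d x = e)
    (hball : ∀ t < e, c + 2 * t ≤ #{v | d v ≤ t}) : 2 * e + c ≤ Fintype.card W + 1 := by
  obtain ⟨x, hx⟩ := htop
  have hlt : #{v | d v ≤ e - 1} < Fintype.card W :=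
    card_lt_univ_of_notMem (x := x) (by simp only [mem_filter, mem_univ, true_and]; omega)
  have := hball (e - 1) (by omega)
  omega

end LevelCounting

namespace SimpleGraph

open Finset

variable {G : SimpleGraph V}

lemma Connected.exists_dist_le_of_le (hG : G.Connected) {a x : V} {i : ℕ}
    (hi : i ≤ G.dist a x) : ∃ w, G.dist a w ≤ i ∧ G.dist w x + i ≤ G.dist a x := by
  obtain ⟨p, hp⟩ := hG.exists_walk_length_eq_dist a x
  refine ⟨p.getVert i, (dist_le (p.take i)).trans ?_, ?_⟩
  · rw [p.take_length]
    exact min_le_left _ _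
  · have := dist_le (p.drop i)
    rw [p.drop_length] at this
    omega

lemma Connected.exists_adj_dist_lt (hG : G.Connected) {a x : V} (hx : 0 < G.dist a x) :
    ∃ q, G.Adj a q ∧ G.dist q x + 1 ≤ G.dist a x := by
  obtain ⟨q, haq, hqx⟩ := hG.exists_dist_le_of_le hx
  refine ⟨q, dist_eq_one_iff_adj.1 (le_antisymm haq ?_), hqx⟩
  refine hG.pos_dist_of_ne fun h => ?_
  subst h
  omega

/-- The distance from `v` to the set `{u₀, u₁}`; a single vertex `u` is the pair `u, u`. -/
noncomputable def pairDist (G : SimpleGraph V) (u₀ u₁ v : V) : ℕ := min (G.dist u₀ v) (G.dist u₁ v)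

lemma pairDist_self (u v : V) : G.pairDist u u v = G.dist u v := min_self _

lemma Connected.pairDist_le_add_dist (hG : G.Connected) (u₀ u₁ w x : V) :
    G.pairDist u₀ u₁ x ≤ G.pairDist u₀ u₁ w + G.dist w x := by
  have h₀ := hG.dist_triangle (u := u₀) (v := w) (w := x)
  have h₁ := hG.dist_triangle (u := u₁) (v := w) (w := x)
  simp only [pairDist]
  omega

lemma Connected.exists_pairDist_eq_of_le (hG : G.Connected) {u₀ u₁ x : V} {i : ℕ}
    (hi : i ≤ G.pairDist u₀ u₁ x) :
    ∃ w, G.pairDist u₀ u₁ w = i ∧ G.dist w x + i ≤ G.pairDist u₀ u₁ x := by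
  obtain ⟨a, ha, hax⟩ : ∃ a, G.pairDist u₀ u₁ a = 0 ∧ G.dist a x = G.pairDist u₀ u₁ x := by
    rcases min_choice (G.dist u₀ x) (G.dist u₁ x) with h | h
    · exact ⟨u₀, by simp [pairDist], h.symm⟩
    · exact ⟨u₁, by simp [pairDist], h.symm⟩
  obtain ⟨w, haw, hwx⟩ := hG.exists_dist_le_of_le (hax ▸ hi)
  have hw := hG.pairDist_le_add_dist u₀ u₁ a w
  have hx := hG.pairDist_le_add_dist u₀ u₁ w x
  exact ⟨w, by omega, by omega⟩

lemma Connected.exists_adj_dist_le_of_dist_le (hG : G.Connected) {a b : V} {r : ℕ}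
    (hab : a ≠ b) (h : G.dist a b ≤ 2 * r + 1) :
    ∃ u₀ u₁, G.Adj u₀ u₁ ∧ G.dist a u₀ ≤ r ∧ G.dist u₁ b ≤ r := by
  have hpos := hG.pos_dist_of_ne hab
  obtain ⟨i, hir, hiD, hDi⟩ : ∃ i, i ≤ r ∧ i < G.dist a b ∧ G.dist a b ≤ i + r + 1 := by
    rcases le_total r (G.dist a b - 1) with h' | h'
    · exact ⟨r, le_rfl, by omega, by omega⟩
    · exact ⟨G.dist a b - 1, h', by omega, by omega⟩
  obtain ⟨u₀, hau₀, hu₀b⟩ := hG.exists_dist_le_of_le hiD.le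
  have := hG.dist_triangle (u := a) (v := u₀) (w := b)
  obtain ⟨u₁, hu, hu₁b⟩ := hG.exists_adj_dist_lt (a := u₀) (x := b) (by omega)
  exact ⟨u₀, u₁, hu, by omega, by omega⟩

def nearGraph (G : SimpleGraph V) (S : Finset V) (k : ℕ) : SimpleGraph S :=
  fromRel fun a b => G.dist a b ≤ k

variable {S : Finset V} {k r : ℕ}

lemma nearGraph_adj {a b : S} : (G.nearGraph S k).Adj a b ↔ a ≠ b ∧ G.dist a b ≤ k := by
  rw [nearGraph, fromRel_adj, dist_comm (u := (b : V)), or_self]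

lemma nearGraph_reachable_of_dist_le {a b : S} (h : G.dist a b ≤ k) :
    (G.nearGraph S k).Reachable a b := by
  rcases eq_or_ne a b with rfl | hab
  · rfl
  · exact (nearGraph_adj.2 ⟨hab, h⟩).reachable

lemma Connected.dist_le_mul_length (hG : G.Connected) {a b : S}
    (p : (G.nearGraph S k).Walk a b) : G.dist a b ≤ k * p.length := by
  induction p with
  | nil => simp
  | @cons x y c h p ih =>
    have := (nearGraph_adj.1 h).2
    have := hG.dist_triangle (u := (x : V)) (v := y) (w := c)
    rw [Walk.length_cons, mul_add_one]
    omega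

lemma Connected.dist_le_mul_dist_nearGraph (hG : G.Connected)
    (hH : (G.nearGraph S k).Connected) (a b : S) :
    G.dist a b ≤ k * (G.nearGraph S k).dist a b := by
  obtain ⟨p, hp⟩ := hH.exists_walk_length_eq_dist a b
  exact hp ▸ hG.dist_le_mul_length p

lemma Connected.nearGraph_connected (hG : G.Connected) (hS : S.Nonempty)
    (hcover : ∀ v, ∃ s ∈ S, G.dist s v ≤ r) : (G.nearGraph S (2 * r + 1)).Connected := by
  have : Nonempty S := hS.to_subtype
  suffices h : ∀ t, ∀ a b : S, G.dist a b ≤ t → (G.nearGraph S (2 * r + 1)).Reachable a b from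
    ⟨fun a b => h _ a b le_rfl⟩
  intro t
  induction t using Nat.strong_induction_on with
  | _ t ih =>
    intro a b hab
    rcases le_or_gt (G.dist a b) (2 * r + 1) with hclose | hfar
    · exact nearGraph_reachable_of_dist_le hclose
    -- a vertex of `S` within `r` of the point at distance `r + 1` from `a` on a geodesic
    obtain ⟨w, haw, hwb⟩ := hG.exists_dist_le_of_le (a := (a : V)) (x := b) (i := r + 1) (by omega)
    obtain ⟨s, hs, hsw⟩ := hcover w
    have has := hG.dist_triangle (u := (a : V)) (v := w) (w := s)
    have hsb := hG.dist_triangle (u := s) (v := w) (w := b)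
    rw [dist_comm (u := w)] at has
    have hs' : G.dist (⟨s, hs⟩ : S) b < t := by simp only; omega
    exact (nearGraph_reachable_of_dist_le (a := a) (b := ⟨s, hs⟩) (by simp only; omega)).trans
      (ih _ hs' ⟨s, hs⟩ b le_rfl)

variable [Fintype V]

noncomputable def pairEcc (G : SimpleGraph V) (u₀ u₁ : V) : ℕ := univ.sup (G.pairDist u₀ u₁)

lemma pairDist_le_pairEcc (u₀ u₁ v : V) : G.pairDist u₀ u₁ v ≤ G.pairEcc u₀ u₁ :=
  le_sup (mem_univ v)

lemma pairEcc_le {u₀ u₁ : V} {m : ℕ} (h : ∀ v, G.pairDist u₀ u₁ v ≤ m) :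
    G.pairEcc u₀ u₁ ≤ m :=
  Finset.sup_le fun v _ => h v

lemma pairEcc_lt {u₀ u₁ : V} {m : ℕ} (hm : 0 < m) (h : ∀ v, G.pairDist u₀ u₁ v < m) :
    G.pairEcc u₀ u₁ < m :=
  (Finset.sup_lt_iff hm).2 fun v _ => h v

lemma exists_pairDist_eq_pairEcc [Nonempty V] (u₀ u₁ : V) :
    ∃ x, G.pairDist u₀ u₁ x = G.pairEcc u₀ u₁ := by
  obtain ⟨x, -, hx⟩ := exists_mem_eq_sup univ univ_nonempty (G.pairDist u₀ u₁)
  exact ⟨x, hx.symm⟩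

/-- If the level `i` of the distance to `{u₀, u₁}` is a single vertex `z`, every vertex beyond
level `i` is reached through `z`, so the neighbour `q` of the centre towards `z` is closer to it;
the `min` covers both a single vertex (use `q`) and an edge (use `a, q`) as the centre. -/
lemma Connected.exists_adj_forall_lt_pairEcc (hG : G.Connected) {u₀ u₁ : V} {i : ℕ}
    (hi : 1 ≤ i) (hie : i < G.pairEcc u₀ u₁)
    (hlevel : {v | G.pairDist u₀ u₁ v = i}.Subsingleton) :
    ∃ a q, (a = u₀ ∨ a = u₁) ∧ G.Adj a q ∧
      ∀ v, min (G.pairDist u₀ u₁ v + 1) (G.dist q v) < G.pairEcc u₀ u₁ := by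
  have : Nonempty V := hG.nonempty
  obtain ⟨x, hx⟩ := exists_pairDist_eq_pairEcc (G := G) u₀ u₁
  obtain ⟨z, hz, -⟩ := hG.exists_pairDist_eq_of_le (hx ▸ hie.le)
  obtain ⟨a, ha, haz⟩ : ∃ a, (a = u₀ ∨ a = u₁) ∧ G.dist a z = i := by
    rcases min_choice (G.dist u₀ z) (G.dist u₁ z) with h | h
    · exact ⟨u₀, .inl rfl, h ▸ hz⟩
    · exact ⟨u₁, .inr rfl, h ▸ hz⟩
  obtain ⟨q, haq, hqz⟩ := hG.exists_adj_dist_lt (haz ▸ hi)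
  refine ⟨a, q, ha, haq, fun v => ?_⟩
  have hv := pairDist_le_pairEcc (G := G) u₀ u₁ v
  rcases lt_or_ge (G.pairDist u₀ u₁ v) i with hvi | hvi
  · omega
  · obtain ⟨w, hw, hwv⟩ := hG.exists_pairDist_eq_of_le hvi
    have hwz : w = z := hlevel hw hz
    subst hwz
    have := hG.dist_triangle (u := q) (v := w) (w := v)
    omega

def IsCentralVertex (G : SimpleGraph V) (u : V) : Prop :=
  ∀ w, G.pairEcc u u ≤ G.pairEcc w w

def IsCentralEdge (G : SimpleGraph V) (u₀ u₁ : V) : Prop :=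
  G.Adj u₀ u₁ ∧ ∀ w₀ w₁, G.Adj w₀ w₁ → G.pairEcc u₀ u₁ ≤ G.pairEcc w₀ w₁

lemma exists_isCentralVertex [Nonempty V] : ∃ u, G.IsCentralVertex u := by
  obtain ⟨u, -, hu⟩ := exists_min_image univ (fun u => G.pairEcc u u) univ_nonempty
  exact ⟨u, fun w => hu w (mem_univ w)⟩

lemma exists_isCentralEdge {a b : V} (h : G.Adj a b) : ∃ u₀ u₁, G.IsCentralEdge u₀ u₁ := by
  classical
  obtain ⟨e, he, hmin⟩ := exists_min_image {e : V × V | G.Adj e.1 e.2}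
    (fun e => G.pairEcc e.1 e.2) ⟨(a, b), by simpa using h⟩
  exact ⟨e.1, e.2, by simpa using he, fun w₀ w₁ hw => hmin (w₀, w₁) (by simpa using hw)⟩

lemma Connected.two_le_card_level_of_isCentralVertex (hG : G.Connected) {u : V}
    (hu : G.IsCentralVertex u) {i : ℕ} (hi : 1 ≤ i) (hie : i < G.pairEcc u u) :
    2 ≤ #{v | G.pairDist u u v = i} := by
  by_contra! hlevel
  obtain ⟨a, q, ha, haq, hq⟩ := hG.exists_adj_forall_lt_pairEcc hi hie
    fun v hv w hw => card_le_one.1 (Nat.le_of_lt_succ hlevel) v (by simpa using hv) w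
      (by simpa using hw)
  obtain rfl : a = u := ha.elim id id
  refine (hu q).not_gt (pairEcc_lt (by omega) fun v => ?_)
  have := hq v
  have := hG.dist_triangle (u := q) (v := a) (w := v)
  have := dist_eq_one_iff_adj.2 haq.symm
  simp only [pairDist_self] at *
  omega

lemma Connected.two_le_card_level_of_isCentralEdge (hG : G.Connected) {u₀ u₁ : V}
    (hu : G.IsCentralEdge u₀ u₁) {i : ℕ} (hi : 1 ≤ i) (hie : i < G.pairEcc u₀ u₁) :
    2 ≤ #{v | G.pairDist u₀ u₁ v = i} := by
  by_contra! hlevel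
  obtain ⟨a, q, ha, haq, hq⟩ := hG.exists_adj_forall_lt_pairEcc hi hie
    fun v hv w hw => card_le_one.1 (Nat.le_of_lt_succ hlevel) v (by simpa using hv) w
      (by simpa using hw)
  refine (hu.2 a q haq).not_gt (pairEcc_lt (by omega) fun v => ?_)
  have := hq v
  have := hG.dist_triangle (u := a) (v := u₀) (w := v)
  have := hG.dist_triangle (u := a) (v := u₁) (w := v)
  have := dist_eq_one_iff_adj.2 hu.1
  have : G.dist u₁ u₀ = 1 := dist_comm.trans this
  rcases ha with rfl | rfl <;> simp only [pairDist, dist_self] at * <;> omega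

lemma Connected.one_add_two_mul_le_card_of_isCentralVertex (hG : G.Connected) {u : V}
    (hu : G.IsCentralVertex u) : ∀ t < G.pairEcc u u, 1 + 2 * t ≤ #{v | G.pairDist u u v ≤ t} :=
  add_two_mul_le_card_filter_le _ (card_pos.2 ⟨u, mem_filter.2 ⟨mem_univ _, by simp [pairDist]⟩⟩)
    fun _ => hG.two_le_card_level_of_isCentralVertex hu

lemma Connected.two_add_two_mul_le_card_of_isCentralEdge (hG : G.Connected) {u₀ u₁ : V}
    (hu : G.IsCentralEdge u₀ u₁) :
    ∀ t < G.pairEcc u₀ u₁, 2 + 2 * t ≤ #{v | G.pairDist u₀ u₁ v ≤ t} :=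
  add_two_mul_le_card_filter_le _
    (one_lt_card.2 ⟨u₀, mem_filter.2 ⟨mem_univ _, by simp [pairDist]⟩,
      u₁, mem_filter.2 ⟨mem_univ _, by simp [pairDist]⟩, hu.1.ne⟩)
    fun _ => hG.two_le_card_level_of_isCentralEdge hu

lemma Connected.exists_two_mul_pairEcc_self_le_card (hG : G.Connected) :
    ∃ u, 2 * G.pairEcc u u ≤ Fintype.card V := by
  have : Nonempty V := hG.nonempty
  obtain ⟨u, hu⟩ := exists_isCentralVertex (G := G)
  refine ⟨u, ?_⟩
  rcases Nat.eq_zero_or_pos (G.pairEcc u u) with he | he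
  · omega
  · have := two_mul_add_le_card_add_one _ he (exists_pairDist_eq_pairEcc u u)
      (hG.one_add_two_mul_le_card_of_isCentralVertex hu)
    omega

lemma Connected.exists_adj_two_mul_pairEcc_lt_card (hG : G.Connected)
    (hV : 2 ≤ Fintype.card V) : ∃ u₀ u₁, G.Adj u₀ u₁ ∧ 2 * G.pairEcc u₀ u₁ < Fintype.card V := by
  obtain ⟨a, b, hab⟩ := Fintype.exists_pair_of_one_lt_card hV
  obtain ⟨q, haq, -⟩ := hG.exists_adj_dist_lt (hG.pos_dist_of_ne hab)
  have : Nonempty V := hG.nonempty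
  obtain ⟨u₀, u₁, hu⟩ := exists_isCentralEdge haq
  refine ⟨u₀, u₁, hu.1, ?_⟩
  rcases Nat.eq_zero_or_pos (G.pairEcc u₀ u₁) with he | he
  · omega
  · have := two_mul_add_le_card_add_one _ he (exists_pairDist_eq_pairEcc u₀ u₁)
      (hG.two_add_two_mul_le_card_of_isCentralEdge hu)
    omega

lemma status_eq_sum_pairDist (u : V) : status G u = ∑ v, G.pairDist u u v := by
  simp only [status, pairDist_self]

lemma minStatus_le_status (u : V) : minStatus G ≤ status G u := Nat.sInf_le ⟨u, rfl⟩

lemma Connected.minStatus_le_of_pairEcc_self_le (hG : G.Connected) {c : V} {m : ℕ}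
    (hc : G.pairEcc c c ≤ m) (hm : 2 * m ≤ Fintype.card V) :
    minStatus G ≤ m * (Fintype.card V - m) := by
  have : Nonempty V := hG.nonempty
  obtain ⟨u, hu⟩ := exists_isCentralVertex (G := G)
  have hsum := sum_add_le_mul_card (G.pairDist u u) (pairDist_le_pairEcc u u)
    ((hu c).trans hc) (by omega) (hG.one_add_two_mul_le_card_of_isCentralVertex hu)
  have hsq : m * (m - 1) + m * 1 = m * m := by cases m <;> simp [Nat.mul_succ]
  have hsplit : m * (Fintype.card V - m) + m * m = m * Fintype.card V := by
    rw [← mul_add, Nat.sub_add_cancel (by omega)]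
  have := minStatus_le_status (G := G) u
  rw [status_eq_sum_pairDist] at this
  omega

lemma status_add_status_le {w₀ w₁ : V} (h : G.Adj w₀ w₁) :
    status G w₀ + status G w₁ ≤ 2 * ∑ v, G.pairDist w₀ w₁ v + Fintype.card V := by
  rw [status, status, ← sum_add_distrib, mul_sum, ← card_univ, card_eq_sum_ones, ← sum_add_distrib]
  refine sum_le_sum fun v _ => ?_
  have := h.diff_dist_adj (u := v)
  rw [dist_comm (u := v), dist_comm (u := v)] at this
  simp only [pairDist]
  omega

lemma Connected.two_mul_minStatus_le_of_adj_pairEcc_le (hG : G.Connected) {u₀ u₁ : V}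
    {m : ℕ} (h : G.Adj u₀ u₁) (hu : G.pairEcc u₀ u₁ ≤ m) (hm : 2 * m + 1 ≤ Fintype.card V) :
    2 * minStatus G ≤ 2 * (m * (Fintype.card V - m - 1)) + Fintype.card V := by
  obtain ⟨w₀, w₁, hw⟩ := exists_isCentralEdge h
  have hsum := sum_add_le_mul_card (G.pairDist w₀ w₁) (pairDist_le_pairEcc w₀ w₁)
    ((hw.2 u₀ u₁ h).trans hu) (by omega) (hG.two_add_two_mul_le_card_of_isCentralEdge hw)
  have hsq : m * (m - 1) + m * 2 = m * (m + 1) := by cases m <;> simp [Nat.mul_succ]; ring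
  have hsplit : m * (Fintype.card V - m - 1) + m * (m + 1) = m * Fintype.card V := by
    rw [← mul_add, show Fintype.card V - m - 1 + (m + 1) = Fintype.card V by omega]
  have := status_add_status_le hw.1
  have := minStatus_le_status (G := G) w₀
  have := minStatus_le_status (G := G) w₁
  omega

lemma Connected.exists_pairEcc_self_le_of_cover (hG : G.Connected) (hS : S.Nonempty)
    (hcover : ∀ v, ∃ s ∈ S, G.dist s v ≤ r) :
    ∃ c, G.pairEcc c c ≤ (2 * r + 1) * (#S / 2) + r := by
  have hH := hG.nearGraph_connected hS hcover
  obtain ⟨c, hc⟩ := hH.exists_two_mul_pairEcc_self_le_card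
  rw [Fintype.card_coe] at hc
  refine ⟨c, pairEcc_le fun v => ?_⟩
  obtain ⟨s, hs, hsv⟩ := hcover v
  have hcs : G.dist c s ≤ (2 * r + 1) * (#S / 2) := by
    refine (hG.dist_le_mul_dist_nearGraph hH c ⟨s, hs⟩).trans (Nat.mul_le_mul_left _ ?_)
    have := pairDist_le_pairEcc (G := G.nearGraph S (2 * r + 1)) c c ⟨s, hs⟩
    rw [pairDist_self] at this
    omega
  have := hG.dist_triangle (u := (c : V)) (v := s) (w := v)
  rw [pairDist_self]
  omega

lemma Connected.exists_adj_pairEcc_le_of_cover (hG : G.Connected) (hS : 2 ≤ #S)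
    (hcover : ∀ v, ∃ s ∈ S, G.dist s v ≤ r) :
    ∃ u₀ u₁, G.Adj u₀ u₁ ∧ G.pairEcc u₀ u₁ ≤ (2 * r + 1) * ((#S - 1) / 2) + 2 * r := by
  have hH := hG.nearGraph_connected (card_pos.1 (by omega)) hcover
  obtain ⟨a, b, hab, he⟩ := hH.exists_adj_two_mul_pairEcc_lt_card (by rwa [Fintype.card_coe])
  rw [Fintype.card_coe] at he
  obtain ⟨hne, hab⟩ := nearGraph_adj.1 hab
  obtain ⟨u₀, u₁, hu, hau₀, hu₁b⟩ :=
    hG.exists_adj_dist_le_of_dist_le (Subtype.coe_ne_coe.2 hne) hab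
  refine ⟨u₀, u₁, hu, pairEcc_le fun v => ?_⟩
  obtain ⟨s, hs, hsv⟩ := hcover v
  have hnear : (G.nearGraph S (2 * r + 1)).pairDist a b ⟨s, hs⟩ ≤ (#S - 1) / 2 :=
    (pairDist_le_pairEcc a b _).trans (by omega)
  have hu₀a : G.dist u₀ a ≤ r := by rwa [dist_comm]
  have hu₀ := hG.dist_triangle (u := u₀) (v := a) (w := s)
  have hu₁ := hG.dist_triangle (u := u₁) (v := b) (w := s)
  have := hG.dist_triangle (u := u₀) (v := s) (w := v)
  have := hG.dist_triangle (u := u₁) (v := s) (w := v)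
  rcases min_choice ((G.nearGraph S (2 * r + 1)).dist a ⟨s, hs⟩)
    ((G.nearGraph S (2 * r + 1)).dist b ⟨s, hs⟩) with h | h <;>
    rw [pairDist, h] at hnear
  · have : G.dist a s ≤ (2 * r + 1) * ((#S - 1) / 2) :=
      (hG.dist_le_mul_dist_nearGraph hH a ⟨s, hs⟩).trans (Nat.mul_le_mul_left _ hnear)
    exact (min_le_left _ _).trans (by omega)
  · have : G.dist b s ≤ (2 * r + 1) * ((#S - 1) / 2) :=
      (hG.dist_le_mul_dist_nearGraph hH b ⟨s, hs⟩).trans (Nat.mul_le_mul_left _ hnear)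
    exact (min_le_right _ _).trans (by omega)

lemma exists_finset_card_eq_domNumber (G : SimpleGraph V) :
    ∃ S : Finset V, #S = domNumber G ∧ ∀ v, ∃ s ∈ S, G.dist s v ≤ 1 := by
  classical
  obtain ⟨S, hdom, hS⟩ : domNumber G ∈
      {k | ∃ S : Set V, (∀ v ∉ S, ∃ u ∈ S, G.Adj u v) ∧ S.ncard = k} :=
    Nat.sInf_mem ⟨_, Set.univ, fun v hv => absurd (Set.mem_univ v) hv, rfl⟩
  refine ⟨S.toFinset, by rw [← hS, Set.ncard_eq_toFinset_card'], fun v => ?_⟩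
  by_cases hv : v ∈ S
  · exact ⟨v, Set.mem_toFinset.2 hv, by simp⟩
  · obtain ⟨u, hu, huv⟩ := hdom v hv
    exact ⟨u, Set.mem_toFinset.2 hu, (dist_eq_one_iff_adj.2 huv).le⟩

end SimpleGraph

theorem stmt18_general [Fintype V] (G : SimpleGraph V) (n γ : ℕ)
    (hn : Fintype.card V = n) (hG : G.Connected)
    (hγ : domNumber G = γ) (h2 : γ < (n + 2) / 3) :
    (Odd γ → minStatus G ≤ ((3 * γ - 1) / 2) * (n - (3 * γ - 1) / 2)) ∧
    (Even γ → minStatus G ≤ (3 * γ / 2) * (n + 1 - 3 * γ / 2) - (n + 1) / 2) := by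
  subst hn hγ
  obtain ⟨S, hS, hcover⟩ := G.exists_finset_card_eq_domNumber
  have hSne : S.Nonempty := by
    obtain ⟨s, hs, -⟩ := hcover hG.nonempty.some
    exact ⟨s, hs⟩
  have hSpos := hSne.card_pos
  refine ⟨fun ⟨j, hj⟩ => ?_, fun ⟨k, hk⟩ => ?_⟩
  · obtain ⟨c, hc⟩ := hG.exists_pairEcc_self_le_of_cover hSne hcover
    have hm : (3 * domNumber G - 1) / 2 = 3 * j + 1 := by omega
    rw [hm]
    exact hG.minStatus_le_of_pairEcc_self_le (hc.trans (by omega)) (by omega)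
  · obtain ⟨u₀, u₁, hu, hecc⟩ := hG.exists_adj_pairEcc_le_of_cover (by omega) hcover
    have := hG.two_mul_minStatus_le_of_adj_pairEcc_le (m := 3 * k - 1) hu
      (hecc.trans (by omega)) (by omega)
    obtain ⟨t, ht⟩ : ∃ t, Fintype.card V = 3 * k + t := ⟨_, (Nat.add_sub_of_le (by omega)).symm⟩
    obtain ⟨p, hp⟩ : ∃ p, 3 * k = p + 1 := ⟨3 * k - 1, by omega⟩
    have hM : 3 * domNumber G / 2 = p + 1 := by omega
    rw [hM, ht, hp, show p + 1 + t + 1 - (p + 1) = t + 1 by omega,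
      show (p + 1) * (t + 1) = p * t + p + t + 1 by ring]
    rw [ht, hp, show p + 1 - 1 = p by omega, show p + 1 + t - p - 1 = t by omega] at this
    omega

/-- Upper bound on the minimum status of a connected graph with order `n` and
domination number `γ < ⌈n/3⌉`. -/
theorem stmt18 [Fintype V] (G : SimpleGraph V) (n γ : ℕ)
    (hn : Fintype.card V = n) (hG : G.Connected)
    (hγ : domNumber G = γ) (h1 : 1 ≤ γ) (h2 : γ < (n + 2) / 3) :
    (Odd γ → minStatus G ≤ ((3 * γ - 1) / 2) * (n - (3 * γ - 1) / 2)) ∧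
    (Even γ → minStatus G ≤ (3 * γ / 2) * (n + 1 - 3 * γ / 2) - (n + 1) / 2) :=
  stmt18_general G n γ hn hG hγ h2
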